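/- Let H_S be a d×d Hermitian complex matrix, H_R an m×m Hermitian complex matrix, γ_R an m×m complex matrix commuting with H_R, and let U be a unitary matrix of size d·m that commutes with the total Hamiltonian H_S ⊗ I_m + I_d ⊗ H_R. Then for every t ∈ ℝ and every d×d complex matrix ρ, Tr_R[U ((exp(−itH_S) ρ exp(itH_S)) ⊗ γ_R) U†] = exp(−itH_S) · Tr_R[U (ρ ⊗ γ_R) U†] · exp(itH_S), where exp denotes the matrix exponential. -/

import Mathlib

/-!
The reference state `γ_R` is invariant under the bath evolution, and the total evolution
`exp(-itH) = exp(-itH_S) ⊗ exp(-itH_R)` commutes with `U` and `U†`. Hence evolving the system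
input is the same as conjugating `U (ρ ⊗ γ_R) U†` by `exp(-itH_S) ⊗ exp(-itH_R)`. Under the
partial trace the system factor pulls out on both sides, while the bath factor cancels by
cyclicity of the trace on the bath.
-/

open Matrix Kronecker

/-- Partial trace over the second (bath) tensor factor. -/
noncomputable def ptrace {d m : ℕ}
    (M : Matrix (Fin d × Fin m) (Fin d × Fin m) ℂ) : Matrix (Fin d) (Fin d) ℂ :=
  fun s s' => ∑ r : Fin m, M (s, r) (s', r)

namespace Matrix

variable {ι κ 𝕜 : Type*} [Fintype ι] [DecidableEq ι] [Fintype κ] [DecidableEq κ]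

section Kronecker

variable (ι κ 𝕜) [CommRing 𝕜]

noncomputable def kroneckerOneAlgHom : Matrix ι ι 𝕜 →ₐ[𝕜] Matrix (ι × κ) (ι × κ) 𝕜 where
  toFun A := A ⊗ₖ (1 : Matrix κ κ 𝕜)
  map_one' := one_kronecker_one
  map_mul' A B := by rw [← mul_kronecker_mul, one_mul]
  map_zero' := zero_kronecker _
  map_add' A B := add_kronecker A B _
  commutes' r := by
    simp only [Algebra.algebraMap_eq_smul_one, smul_kronecker, one_kronecker_one]

noncomputable def oneKroneckerAlgHom : Matrix κ κ 𝕜 →ₐ[𝕜] Matrix (ι × κ) (ι × κ) 𝕜 where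
  toFun B := (1 : Matrix ι ι 𝕜) ⊗ₖ B
  map_one' := one_kronecker_one
  map_mul' A B := by rw [← mul_kronecker_mul, one_mul]
  map_zero' := kronecker_zero _
  map_add' A B := kronecker_add _ A B
  commutes' r := by
    simp only [Algebra.algebraMap_eq_smul_one, kronecker_smul, one_kronecker_one]

end Kronecker

variable [RCLike 𝕜]

theorem exp_kronecker_one (A : Matrix ι ι 𝕜) :
    NormedSpace.exp (A ⊗ₖ (1 : Matrix κ κ 𝕜)) = NormedSpace.exp A ⊗ₖ (1 : Matrix κ κ 𝕜) := by
  open scoped Matrix.Norms.Operator in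
  exact (NormedSpace.map_exp (kroneckerOneAlgHom ι κ 𝕜)
    (LinearMap.continuous_of_finiteDimensional (kroneckerOneAlgHom ι κ 𝕜).toLinearMap) A).symm

theorem exp_one_kronecker (B : Matrix κ κ 𝕜) :
    NormedSpace.exp ((1 : Matrix ι ι 𝕜) ⊗ₖ B) = (1 : Matrix ι ι 𝕜) ⊗ₖ NormedSpace.exp B := by
  open scoped Matrix.Norms.Operator in
  exact (NormedSpace.map_exp (oneKroneckerAlgHom ι κ 𝕜)
    (LinearMap.continuous_of_finiteDimensional (oneKroneckerAlgHom ι κ 𝕜).toLinearMap) B).symm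

theorem exp_kronecker_one_add_one_kronecker (A : Matrix ι ι 𝕜) (B : Matrix κ κ 𝕜) :
    NormedSpace.exp (A ⊗ₖ (1 : Matrix κ κ 𝕜) + (1 : Matrix ι ι 𝕜) ⊗ₖ B)
      = NormedSpace.exp A ⊗ₖ NormedSpace.exp B := by
  have hAB : Commute (A ⊗ₖ (1 : Matrix κ κ 𝕜)) ((1 : Matrix ι ι 𝕜) ⊗ₖ B) := by
    simp only [Commute, SemiconjBy, ← mul_kronecker_mul, one_mul, mul_one]
  rw [exp_add_of_commute _ _ hAB, exp_kronecker_one, exp_one_kronecker, ← mul_kronecker_mul,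
    one_mul, mul_one]

theorem exp_mul_exp_neg (A : Matrix ι ι 𝕜) : NormedSpace.exp A * NormedSpace.exp (-A) = 1 := by
  rw [← exp_add_of_commute _ _ (Commute.refl A).neg_right, add_neg_cancel, NormedSpace.exp_zero]

theorem exp_neg_mul_mul_exp_of_commute {A X : Matrix ι ι 𝕜} (h : Commute X A) :
    NormedSpace.exp (-A) * X * NormedSpace.exp A = X := by
  open scoped Matrix.Norms.Operator in
  exact SemiconjBy.exp_neg_mul_mul_exp_eq_self h

end Matrix

section PartialTrace

variable {d m : ℕ}

theorem ptrace_kronecker_one_mul (A : Matrix (Fin d) (Fin d) ℂ)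
    (M : Matrix (Fin d × Fin m) (Fin d × Fin m) ℂ) :
    ptrace ((A ⊗ₖ (1 : Matrix (Fin m) (Fin m) ℂ)) * M) = A * ptrace M := by
  ext s s'
  simp only [ptrace, mul_apply, kroneckerMap_apply, Fintype.sum_prod_type, one_apply, mul_ite,
    mul_one, mul_zero, ite_mul, zero_mul, Finset.sum_ite_eq, Finset.mem_univ, if_true,
    Finset.mul_sum]
  exact Finset.sum_comm

theorem ptrace_mul_kronecker_one (A : Matrix (Fin d) (Fin d) ℂ)
    (M : Matrix (Fin d × Fin m) (Fin d × Fin m) ℂ) :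
    ptrace (M * (A ⊗ₖ (1 : Matrix (Fin m) (Fin m) ℂ))) = ptrace M * A := by
  ext s s'
  simp only [ptrace, mul_apply, kroneckerMap_apply, Fintype.sum_prod_type, one_apply, mul_ite,
    mul_one, mul_zero, Finset.sum_ite_eq', Finset.mem_univ, if_true, Finset.sum_mul]
  exact Finset.sum_comm

theorem ptrace_one_kronecker_mul_comm (B : Matrix (Fin m) (Fin m) ℂ)
    (M : Matrix (Fin d × Fin m) (Fin d × Fin m) ℂ) :
    ptrace (((1 : Matrix (Fin d) (Fin d) ℂ) ⊗ₖ B) * M)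
      = ptrace (M * ((1 : Matrix (Fin d) (Fin d) ℂ) ⊗ₖ B)) := by
  ext s s'
  simp only [ptrace, mul_apply, kroneckerMap_apply, one_apply, ite_mul, one_mul, zero_mul,
    Fintype.sum_prod_type, Finset.sum_ite_irrel, Finset.sum_const_zero, Finset.sum_ite_eq,
    Finset.mem_univ, if_true, mul_ite, mul_zero, Finset.sum_ite_eq']
  rw [Finset.sum_comm]
  simp only [mul_comm]

theorem ptrace_kronecker_mul_mul_kronecker (A A' : Matrix (Fin d) (Fin d) ℂ)
    {B B' : Matrix (Fin m) (Fin m) ℂ} (hB : B' * B = 1)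
    (M : Matrix (Fin d × Fin m) (Fin d × Fin m) ℂ) :
    ptrace ((A ⊗ₖ B) * M * (A' ⊗ₖ B')) = A * ptrace M * A' := by
  have hsplit : (A ⊗ₖ B) * M * (A' ⊗ₖ B') = (A ⊗ₖ (1 : Matrix (Fin m) (Fin m) ℂ)) *
      (((1 : Matrix (Fin d) (Fin d) ℂ) ⊗ₖ B) * (M * ((1 : Matrix (Fin d) (Fin d) ℂ) ⊗ₖ B'))) *
      (A' ⊗ₖ (1 : Matrix (Fin m) (Fin m) ℂ)) := by
    simp only [← mul_assoc, ← mul_kronecker_mul, mul_one, one_mul]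
    rw [mul_assoc (_ * M), ← mul_kronecker_mul, one_mul, mul_one]
  rw [hsplit, ptrace_mul_kronecker_one, ptrace_kronecker_one_mul, ptrace_one_kronecker_mul_comm,
    mul_assoc M, ← mul_kronecker_mul, hB, one_mul, one_kronecker_one, mul_one]

theorem ptrace_conj_exp_kronecker_of_commute (A : Matrix (Fin d) (Fin d) ℂ)
    {B γ : Matrix (Fin m) (Fin m) ℂ} (hγ : Commute γ B)
    {U V : Matrix (Fin d × Fin m) (Fin d × Fin m) ℂ}
    (hU : Commute U (A ⊗ₖ (1 : Matrix (Fin m) (Fin m) ℂ) + (1 : Matrix (Fin d) (Fin d) ℂ) ⊗ₖ B))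
    (hV : Commute V (A ⊗ₖ (1 : Matrix (Fin m) (Fin m) ℂ) + (1 : Matrix (Fin d) (Fin d) ℂ) ⊗ₖ B))
    (ρ : Matrix (Fin d) (Fin d) ℂ) :
    ptrace (U * ((NormedSpace.exp (-A) * ρ * NormedSpace.exp A) ⊗ₖ γ) * V)
      = NormedSpace.exp (-A) * ptrace (U * (ρ ⊗ₖ γ) * V) * NormedSpace.exp A := by
  set H := A ⊗ₖ (1 : Matrix (Fin m) (Fin m) ℂ) + (1 : Matrix (Fin d) (Fin d) ℂ) ⊗ₖ B
  have hexpH : NormedSpace.exp H = NormedSpace.exp A ⊗ₖ NormedSpace.exp B :=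
    exp_kronecker_one_add_one_kronecker A B
  have hexp_negH : NormedSpace.exp (-H) = NormedSpace.exp (-A) ⊗ₖ NormedSpace.exp (-B) := by
    rw [← exp_kronecker_one_add_one_kronecker, ← neg_one_smul ℂ A, ← neg_one_smul ℂ B,
      smul_kronecker, kronecker_smul, ← smul_add, neg_one_smul]
  have hstate : (NormedSpace.exp (-A) * ρ * NormedSpace.exp A) ⊗ₖ γ
      = NormedSpace.exp (-H) * (ρ ⊗ₖ γ) * NormedSpace.exp H := by
    rw [hexpH, hexp_negH, ← mul_kronecker_mul, ← mul_kronecker_mul,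
      exp_neg_mul_mul_exp_of_commute hγ]
  calc ptrace (U * ((NormedSpace.exp (-A) * ρ * NormedSpace.exp A) ⊗ₖ γ) * V)
      = ptrace ((U * NormedSpace.exp (-H)) * (ρ ⊗ₖ γ) * (NormedSpace.exp H * V)) := by
        rw [hstate]; simp only [mul_assoc]
    _ = ptrace (NormedSpace.exp (-H) * (U * (ρ ⊗ₖ γ) * V) * NormedSpace.exp H) := by
        rw [hU.neg_right.exp_right.eq, ← hV.exp_right.eq]; simp only [mul_assoc]
    _ = NormedSpace.exp (-A) * ptrace (U * (ρ ⊗ₖ γ) * V) * NormedSpace.exp A := by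
        rw [hexpH, hexp_negH, ptrace_kronecker_mul_mul_kronecker _ _ (exp_mul_exp_neg B)]

end PartialTrace

theorem thermal_operation_time_translation_symmetric_general
    (d m : ℕ) (HS : Matrix (Fin d) (Fin d) ℂ)
    (HR : Matrix (Fin m) (Fin m) ℂ)
    (γR : Matrix (Fin m) (Fin m) ℂ) (hγR : γR * HR = HR * γR)
    (U : Matrix (Fin d × Fin m) (Fin d × Fin m) ℂ)
    (hU : U ∈ Matrix.unitaryGroup (Fin d × Fin m) ℂ)
    (hcomm : U * (HS ⊗ₖ (1 : Matrix (Fin m) (Fin m) ℂ)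
                  + (1 : Matrix (Fin d) (Fin d) ℂ) ⊗ₖ HR)
           = (HS ⊗ₖ (1 : Matrix (Fin m) (Fin m) ℂ)
                  + (1 : Matrix (Fin d) (Fin d) ℂ) ⊗ₖ HR) * U)
    (t : ℝ) (ρ : Matrix (Fin d) (Fin d) ℂ) :
    ptrace (U * ((NormedSpace.exp ((-(Complex.I * t)) • HS) * ρ *
                  NormedSpace.exp ((Complex.I * t) • HS)) ⊗ₖ γR) * Uᴴ)
      = NormedSpace.exp ((-(Complex.I * t)) • HS) *
          ptrace (U * (ρ ⊗ₖ γR) * Uᴴ) *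
          NormedSpace.exp ((Complex.I * t) • HS) := by
  set c : ℂ := Complex.I * t
  have hUH : Commute U (HS ⊗ₖ (1 : Matrix (Fin m) (Fin m) ℂ)
      + (1 : Matrix (Fin d) (Fin d) ℂ) ⊗ₖ HR) := hcomm
  have hUstar : Commute Uᴴ (HS ⊗ₖ (1 : Matrix (Fin m) (Fin m) ℂ)
      + (1 : Matrix (Fin d) (Fin d) ℂ) ⊗ₖ HR) :=
    hUH.units_inv_left (u := Unitary.toUnits ⟨U, hU⟩)
  have hscale : (c • HS) ⊗ₖ (1 : Matrix (Fin m) (Fin m) ℂ)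
      + (1 : Matrix (Fin d) (Fin d) ℂ) ⊗ₖ (c • HR)
      = c • (HS ⊗ₖ (1 : Matrix (Fin m) (Fin m) ℂ) + (1 : Matrix (Fin d) (Fin d) ℂ) ⊗ₖ HR) := by
    rw [smul_kronecker, kronecker_smul, smul_add]
  rw [neg_smul]
  refine ptrace_conj_exp_kronecker_of_commute _ (Commute.smul_right hγR c) ?_ ?_ ρ
  · rw [hscale]; exact hUH.smul_right c
  · rw [hscale]; exact hUstar.smul_right c

/-- **Time-translation symmetry of thermal operations**: if the joint unitary
`U` commutes with the total Hamiltonian `H_S ⊗ 1 + 1 ⊗ H_R` and the bath state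
`γ_R` commutes with `H_R`, then the induced channel is covariant with respect to
the time evolution generated by `H_S`. -/
theorem thermal_operation_time_translation_symmetric
    (d m : ℕ) (HS : Matrix (Fin d) (Fin d) ℂ) (hHS : HS.IsHermitian)
    (HR : Matrix (Fin m) (Fin m) ℂ) (hHR : HR.IsHermitian)
    (γR : Matrix (Fin m) (Fin m) ℂ) (hγR : γR * HR = HR * γR)
    (U : Matrix (Fin d × Fin m) (Fin d × Fin m) ℂ)
    (hU : U ∈ Matrix.unitaryGroup (Fin d × Fin m) ℂ)
    (hcomm : U * (HS ⊗ₖ (1 : Matrix (Fin m) (Fin m) ℂ)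
                  + (1 : Matrix (Fin d) (Fin d) ℂ) ⊗ₖ HR)
           = (HS ⊗ₖ (1 : Matrix (Fin m) (Fin m) ℂ)
                  + (1 : Matrix (Fin d) (Fin d) ℂ) ⊗ₖ HR) * U)
    (t : ℝ) (ρ : Matrix (Fin d) (Fin d) ℂ) :
    ptrace (U * ((NormedSpace.exp ((-(Complex.I * t)) • HS) * ρ *
                  NormedSpace.exp ((Complex.I * t) • HS)) ⊗ₖ γR) * Uᴴ)
      = NormedSpace.exp ((-(Complex.I * t)) • HS) *
          ptrace (U * (ρ ⊗ₖ γR) * Uᴴ) *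
          NormedSpace.exp ((Complex.I * t) • HS) :=
  thermal_operation_time_translation_symmetric_general d m HS HR γR hγR U hU hcomm t ρ
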